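/- arXiv:1206.1660 — 3 statements merged into one kernel-verified Lean document; each statement's English description precedes it below -/
import Mathlib

section
/- Let Σ be a p×p positive definite symmetric real matrix and μ_d a vector in ℝ^p. Let β₀ = Σ⁻¹ μ_d and let A = {k : (β₀)_k ≠ 0} be the support of β₀. Then the quadratic form restricted to A equals the full quadratic form: (μ_d)_A^T (Σ_{AA})⁻¹ (μ_d)_A = μ_d^T Σ⁻¹ μ_d, where Σ_{AA} is the principal submatrix of Σ indexed by A and (μ_d)_A is the subvector of μ_d indexed by A. -/
open Matrix Finset

/-- The restricted discriminant quadratic form `(μ_d)_A^T (Σ_{AA})⁻¹ (μ_d)_A`. -/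
noncomputable def restrictedQuad {p : ℕ} (S : Matrix (Fin p) (Fin p) ℝ) (μ : Fin p → ℝ)
    (A : Finset (Fin p)) : ℝ :=
  (fun k : A => μ k) ⬝ᵥ
    ((S.submatrix (fun i : A => (i : Fin p)) (fun j : A => (j : Fin p)))⁻¹).mulVec
      (fun k : A => μ k)

/-!
Since `β₀ = Σ⁻¹ μ_d` vanishes off `A`, the equation `Σ β₀ = μ_d` read on the rows in `A` only
involves the columns in `A`, i.e. `Σ_{AA} (β₀)_A = (μ_d)_A`. Hence `(Σ_{AA})⁻¹ (μ_d)_A = (β₀)_A`,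
and both quadratic forms equal `μ_d ⬝ β₀`.
-/

section SupportedVectors

variable {n R : Type*} [Fintype n] [CommSemiring R] {s : Finset n}

theorem subtype_dotProduct_subtype_of_eq_zero (v : n → R) {w : n → R}
    (hw : ∀ j ∉ s, w j = 0) :
    (fun k : s => v k) ⬝ᵥ (fun k : s => w k) = v ⬝ᵥ w := by
  simp only [dotProduct]
  rw [Finset.sum_coe_sort s (fun j => v j * w j)]
  exact Finset.sum_subset (Finset.subset_univ s) fun j _ hj => by rw [hw j hj, mul_zero]

theorem submatrix_mulVec_subtype_of_eq_zero (S : Matrix n n R) {w : n → R}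
    (hw : ∀ j ∉ s, w j = 0) :
    S.submatrix (Subtype.val : s → n) Subtype.val *ᵥ (fun k : s => w k) = fun i : s => (S *ᵥ w) i := by
  funext i
  exact subtype_dotProduct_subtype_of_eq_zero (S i) hw

end SupportedVectors

theorem inv_submatrix_mulVec_subtype_of_eq_zero {n R : Type*} [Fintype n] [DecidableEq n]
    [CommRing R] {s : Finset n} {S : Matrix n n R} {w : n → R}
    (hS : IsUnit (S.submatrix (Subtype.val : s → n) Subtype.val).det) (hw : ∀ j ∉ s, w j = 0) :
    (S.submatrix (Subtype.val : s → n) Subtype.val)⁻¹ *ᵥ (fun k : s => (S *ᵥ w) k) =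
      fun k : s => w k := by
  have := invertibleOfIsUnitDet _ hS
  exact inv_mulVec_eq_vec (submatrix_mulVec_subtype_of_eq_zero S hw).symm

theorem restrictedQuad_eq_dotProduct_of_mulVec_eq {p : ℕ} {S : Matrix (Fin p) (Fin p) ℝ}
    {μ β : Fin p → ℝ} {A : Finset (Fin p)}
    (hSA : IsUnit (S.submatrix (Subtype.val : A → Fin p) Subtype.val).det)
    (hSβ : S *ᵥ β = μ) (hβA : ∀ j ∉ A, β j = 0) :
    restrictedQuad S μ A = μ ⬝ᵥ β := by
  subst hSβ
  rw [restrictedQuad, inv_submatrix_mulVec_subtype_of_eq_zero hSA hβA,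
    subtype_dotProduct_subtype_of_eq_zero _ hβA]

theorem stmt0 {p : ℕ} (S : Matrix (Fin p) (Fin p) ℝ) (hS : S.PosDef) (μd : Fin p → ℝ)
    (β : Fin p → ℝ) (hβ : β = S⁻¹.mulVec μd)
    (A : Finset (Fin p)) (hA : A = Finset.univ.filter (fun k => β k ≠ 0)) :
    restrictedQuad S μd A = μd ⬝ᵥ S⁻¹.mulVec μd := by
  have hSA : IsUnit (S.submatrix (Subtype.val : A → Fin p) Subtype.val).det :=
    (hS.submatrix Subtype.coe_injective).det_pos.ne'.isUnit
  have hSβ : S *ᵥ β = μd := by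
    rw [hβ, mulVec_mulVec, mul_nonsing_inv S hS.det_pos.ne'.isUnit, one_mulVec]
  have hβA : ∀ j ∉ A, β j = 0 := fun j hj => by simpa [hA] using hj
  rw [restrictedQuad_eq_dotProduct_of_mulVec_eq hSA hSβ hβA, hβ]
end

section
/- Let Σ be a p×p positive definite symmetric real matrix whose eigenvalues all lie in [1/c₀, c₀] for some constant c₀ ≥ 1, let μ_d ∈ ℝ^p, and β₀ = 2Σ⁻¹μ_d. For any index set A₁ ⊆ {1,…,p}, letting s = Σ_{k ∉ A₁} |(β₀)_k|², the difference Δ_p − Δ_{A₁} satisfies 0 ≤ Δ_p − Δ_{A₁} ≤ C·s for a constant C depending only on c₀, where Δ_p = μ_d^T Σ⁻¹ μ_d and Δ_{A₁} = (μ_d)_{A₁}^T (Σ_{A₁A₁})⁻¹ (μ_d)_{A₁}. -/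
/-! Everything rests on the variational formula `μᵀ M⁻¹ μ = max_b (2 bᵀμ - bᵀ M b)` for positive
definite `M`, with defect `(b - M⁻¹μ)ᵀ M (b - M⁻¹μ)`. Vectors supported on `A` see only `Σ_{AA}`,
so `Δ_A` is the maximum over them, whence `Δ_A ≤ Δ_p`. Evaluating at the restriction of
`β = Σ⁻¹μ` to `A` bounds `Δ_p - Δ_A` by the defect at that vector, which is at most
`λ_max(Σ) · ∑_{k ∉ A} β_k²`. -/

open Matrix Finset

open Function
open scoped MatrixOrder

namespace Matrix

variable {m n : Type*} [Fintype m] [Fintype n]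

def quadObjective (M : Matrix n n ℝ) (μ b : n → ℝ) : ℝ :=
  2 * (b ⬝ᵥ μ) - b ⬝ᵥ M *ᵥ b

section ExtendByZero

variable {R : Type*} [CommSemiring R] {e : m → n}

theorem extend_zero_dotProduct (he : Injective e) (x : m → R) (v : n → R) :
    extend e x 0 ⬝ᵥ v = x ⬝ᵥ (v ∘ e) :=
  (Fintype.sum_of_injective e he _ _
    (fun i hi => by simp [extend_apply' _ _ _ (by simpa using hi)])
    (fun i => by simp [he.extend_apply])).symm

theorem mulVec_extend_zero_comp (he : Injective e) (M : Matrix n n R) (x : m → R) :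
    (M *ᵥ extend e x 0) ∘ e = M.submatrix e e *ᵥ x := by
  funext i
  rw [Function.comp_apply, mulVec, dotProduct_comm, extend_zero_dotProduct he, dotProduct_comm]
  rfl

theorem quadObjective_extend_zero (he : Injective e) (M : Matrix n n ℝ) (μ : n → ℝ)
    (x : m → ℝ) :
    quadObjective M μ (extend e x 0) = quadObjective (M.submatrix e e) (μ ∘ e) x := by
  rw [quadObjective, quadObjective, extend_zero_dotProduct he, extend_zero_dotProduct he,
    mulVec_extend_zero_comp he]

end ExtendByZero

variable [DecidableEq n] {M : Matrix n n ℝ}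

theorem IsHermitian.dotProduct_mulVec_le_of_eigenvalues_le (hM : M.IsHermitian) {c : ℝ}
    (h : ∀ i, hM.eigenvalues i ≤ c) (x : n → ℝ) :
    x ⬝ᵥ M *ᵥ x ≤ c * (x ⬝ᵥ x) := by
  have hle : M ≤ algebraMap ℝ (Matrix n n ℝ) c := by
    refine le_algebraMap_of_spectrum_le (fun r hr => ?_) hM
    obtain ⟨i, rfl⟩ := hM.spectrum_real_eq_range_eigenvalues ▸ hr
    exact h i
  have := (Matrix.le_iff.mp hle).dotProduct_mulVec_nonneg x
  simpa only [star_trivial, sub_mulVec, dotProduct_sub, Algebra.algebraMap_eq_smul_one,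
    smul_mulVec, one_mulVec, dotProduct_smul, smul_eq_mul, sub_nonneg] using this

theorem quadObjective_inv_mulVec (hM : IsUnit M.det) (μ : n → ℝ) :
    quadObjective M μ (M⁻¹ *ᵥ μ) = μ ⬝ᵥ M⁻¹ *ᵥ μ := by
  rw [quadObjective, mulVec_mulVec, mul_nonsing_inv _ hM, one_mulVec, dotProduct_comm μ]
  ring

theorem dotProduct_inv_mulVec_sub_quadObjective (hM : M.IsHermitian) (hdet : IsUnit M.det)
    (μ b : n → ℝ) :
    μ ⬝ᵥ M⁻¹ *ᵥ μ - quadObjective M μ b = (b - M⁻¹ *ᵥ μ) ⬝ᵥ M *ᵥ (b - M⁻¹ *ᵥ μ) := by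
  have hMβ : M *ᵥ (M⁻¹ *ᵥ μ) = μ := by rw [mulVec_mulVec, mul_nonsing_inv _ hdet, one_mulVec]
  have hsymm : M⁻¹ *ᵥ μ ⬝ᵥ M *ᵥ b = μ ⬝ᵥ b := by
    rw [dotProduct_mulVec, ← mulVec_transpose, ← conjTranspose_eq_transpose_of_trivial, hM.eq,
      hMβ, dotProduct_comm]
  rw [quadObjective, mulVec_sub, hMβ, dotProduct_sub, sub_dotProduct, sub_dotProduct, hsymm,
    dotProduct_comm b μ, dotProduct_comm (M⁻¹ *ᵥ μ) μ]
  ring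

theorem PosDef.quadObjective_le (hM : M.PosDef) (μ b : n → ℝ) :
    quadObjective M μ b ≤ μ ⬝ᵥ M⁻¹ *ᵥ μ := by
  have := hM.posSemidef.dotProduct_mulVec_nonneg (b - M⁻¹ *ᵥ μ)
  rw [star_trivial, ← dotProduct_inv_mulVec_sub_quadObjective hM.1
    ((isUnit_iff_isUnit_det M).mp hM.isUnit)] at this
  linarith

end Matrix

theorem extend_restrict_sub_dotProduct_self {n : Type*} [Fintype n] [DecidableEq n]
    (A : Finset n) (v : n → ℝ) :
    (extend ((↑) : A → n) (fun k => v k) 0 - v) ⬝ᵥ (extend ((↑) : A → n) (fun k => v k) 0 - v) =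
      ∑ k ∈ Aᶜ, v k ^ 2 := by
  have hw (i : n) :
      (extend ((↑) : A → n) (fun k => v k) 0 - v) i = if i ∈ A then 0 else -v i := by
    by_cases hi : i ∈ A
    · simp [hi, Subtype.val_injective.extend_apply _ _ (⟨i, hi⟩ : A)]
    · simp [hi]
  rw [dotProduct, ← sum_compl_add_sum A, sum_eq_zero (s := A) (fun i hi => by simp [hw, hi]),
    add_zero]
  exact sum_congr rfl fun i hi => by simp [hw, mem_compl.mp hi, sq]

section Restriction

variable {p : ℕ} {S : Matrix (Fin p) (Fin p) ℝ}

theorem restrictedQuad_le (hS : S.PosDef) (μ : Fin p → ℝ) (A : Finset (Fin p)) :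
    restrictedQuad S μ A ≤ μ ⬝ᵥ S⁻¹ *ᵥ μ := by
  set SA := S.submatrix (Subtype.val : A → Fin p) Subtype.val
  set μA : A → ℝ := fun k => μ k
  have hSA : IsUnit SA.det :=
    (isUnit_iff_isUnit_det _).mp (hS.submatrix Subtype.val_injective).isUnit
  calc restrictedQuad S μ A
      = quadObjective SA μA (SA⁻¹ *ᵥ μA) := (quadObjective_inv_mulVec hSA μA).symm
    _ = quadObjective S μ (extend (↑) (SA⁻¹ *ᵥ μA) 0) :=
        (quadObjective_extend_zero Subtype.val_injective _ _ _).symm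
    _ ≤ μ ⬝ᵥ S⁻¹ *ᵥ μ := hS.quadObjective_le _ _

theorem sub_restrictedQuad_le (hS : S.PosDef) {c : ℝ} (h : ∀ i, hS.1.eigenvalues i ≤ c)
    (μ : Fin p → ℝ) (A : Finset (Fin p)) :
    μ ⬝ᵥ S⁻¹ *ᵥ μ - restrictedQuad S μ A ≤ c * ∑ k ∈ Aᶜ, (S⁻¹ *ᵥ μ) k ^ 2 := by
  set β := S⁻¹ *ᵥ μ
  set b : Fin p → ℝ := extend ((↑) : A → Fin p) (fun k => β k) 0
  have hb : quadObjective S μ b ≤ restrictedQuad S μ A := by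
    rw [quadObjective_extend_zero Subtype.val_injective]
    exact (hS.submatrix Subtype.val_injective).quadObjective_le _ _
  calc μ ⬝ᵥ β - restrictedQuad S μ A
      ≤ μ ⬝ᵥ β - quadObjective S μ b := by linarith
    _ = (b - β) ⬝ᵥ S *ᵥ (b - β) :=
        dotProduct_inv_mulVec_sub_quadObjective hS.1 ((isUnit_iff_isUnit_det S).mp hS.isUnit) μ b
    _ ≤ c * ((b - β) ⬝ᵥ (b - β)) := hS.1.dotProduct_mulVec_le_of_eigenvalues_le h _
    _ = c * ∑ k ∈ Aᶜ, β k ^ 2 := by rw [extend_restrict_sub_dotProduct_self]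

end Restriction

theorem stmt1 (c₀ : ℝ) (hc₀ : 1 ≤ c₀) :
    ∃ C : ℝ, 0 < C ∧
      ∀ (p : ℕ) (S : Matrix (Fin p) (Fin p) ℝ) (hS : S.PosDef)
        (heig : ∀ i, c₀⁻¹ ≤ hS.1.eigenvalues i ∧ hS.1.eigenvalues i ≤ c₀)
        (μd : Fin p → ℝ) (β₀ : Fin p → ℝ) (hβ₀ : β₀ = (2 : ℝ) • S⁻¹.mulVec μd)
        (A₁ : Finset (Fin p)),
        0 ≤ μd ⬝ᵥ S⁻¹.mulVec μd - restrictedQuad S μd A₁ ∧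
        μd ⬝ᵥ S⁻¹.mulVec μd - restrictedQuad S μd A₁ ≤ C * ∑ k ∈ A₁ᶜ, (β₀ k) ^ 2 := by
  refine ⟨c₀ / 4, by positivity, fun p S hS heig μd β₀ hβ₀ A₁ =>
    ⟨sub_nonneg.mpr (restrictedQuad_le hS μd A₁), ?_⟩⟩
  have hβ₀_sq : ∑ k ∈ A₁ᶜ, β₀ k ^ 2 = 4 * ∑ k ∈ A₁ᶜ, (S⁻¹ *ᵥ μd) k ^ 2 := by
    norm_num [hβ₀, mul_sum, mul_pow]
  calc μd ⬝ᵥ S⁻¹ *ᵥ μd - restrictedQuad S μd A₁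
      ≤ c₀ * ∑ k ∈ A₁ᶜ, (S⁻¹ *ᵥ μd) k ^ 2 := sub_restrictedQuad_le hS (fun i => (heig i).2) μd A₁
    _ = c₀ / 4 * ∑ k ∈ A₁ᶜ, β₀ k ^ 2 := by rw [hβ₀_sq]; ring
end

section
/- Let Σ be symmetric positive definite with largest eigenvalue at most c₀, μ_d ∈ ℝ^p, β₀ = 2Σ⁻¹μ_d, and A₁ ⊆ {1,…,p}. Then Δ_p − Δ_{A₁} ≤ (c₀/4) Σ_{k∉A₁} |(β₀)_k|², where Δ_p = μ_d^TΣ⁻¹μ_d and Δ_{A₁} = (μ_d)_{A₁}^T(Σ_{A₁A₁})⁻¹(μ_d)_{A₁}. -/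
/-!
Completing the square: for symmetric positive definite `M`,
`2 xᵀμ - xᵀMx = μᵀM⁻¹μ - (M⁻¹μ - x)ᵀM(M⁻¹μ - x)`, so `μᵀM⁻¹μ` is the maximum of
`2 xᵀμ - xᵀMx`. Applied to `Σ_{A₁A₁}` with `x` the restriction of `b = Σ⁻¹μ_d` to `A₁`,
this gives `Δ_p - Δ_{A₁} ≤ wᵀΣw` where `w` is `b` with the coordinates in `A₁` set to
zero, and `wᵀΣw ≤ c₀ |w|² = (c₀/4) Σ_{k∉A₁} |(β₀)_k|²`.
-/

open Matrix Finset
open scoped MatrixOrder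

namespace Matrix

variable {n R : Type*} [Fintype n] [CommRing R]

lemma IsSymm.dotProduct_mulVec_comm {S : Matrix n n R} (hS : S.IsSymm) (v w : n → R) :
    v ⬝ᵥ S *ᵥ w = w ⬝ᵥ S *ᵥ v := by
  rw [dotProduct_mulVec, ← mulVec_transpose, hS.eq, dotProduct_comm]

lemma IsSymm.two_dotProduct_mulVec_sub_eq {S : Matrix n n R} (hS : S.IsSymm) (b v : n → R) :
    2 * (v ⬝ᵥ S *ᵥ b) - v ⬝ᵥ S *ᵥ v = b ⬝ᵥ S *ᵥ b - (b - v) ⬝ᵥ S *ᵥ (b - v) := by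
  rw [mulVec_sub, dotProduct_sub, sub_dotProduct, sub_dotProduct,
    hS.dotProduct_mulVec_comm b v]
  ring

variable [DecidableEq n]

lemma mulVec_nonsing_inv_mulVec {M : Matrix n n R} (h : IsUnit M.det) (μ : n → R) : M *ᵥ (M⁻¹ *ᵥ μ) = μ := by
  rw [mulVec_mulVec, mul_nonsing_inv _ h, one_mulVec]

lemma PosDef.two_dotProduct_sub_le_dotProduct_inv_mulVec {M : Matrix n n ℝ} (hM : M.PosDef)
    (μ x : n → ℝ) : 2 * (x ⬝ᵥ μ) - x ⬝ᵥ M *ᵥ x ≤ μ ⬝ᵥ M⁻¹ *ᵥ μ := by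
  set b := M⁻¹ *ᵥ μ
  have hMb : M *ᵥ b = μ := mulVec_nonsing_inv_mulVec (hM.isUnit.map detMonoidHom) μ
  have hsq := (isHermitian_iff_isSymm.mp hM.1).two_dotProduct_mulVec_sub_eq b x
  have hnonneg := hM.posSemidef.dotProduct_mulVec_nonneg (b - x)
  rw [star_trivial] at hnonneg
  rw [hMb] at hsq
  rw [dotProduct_comm μ]
  linarith

lemma IsHermitian.dotProduct_mulVec_le_of_eigenvalues_le_s10 {S : Matrix n n ℝ}
    (hS : S.IsHermitian) {c : ℝ} (hc : ∀ i, hS.eigenvalues i ≤ c) (w : n → ℝ) :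
    w ⬝ᵥ S *ᵥ w ≤ c * (w ⬝ᵥ w) := by
  have hle : S ≤ algebraMap ℝ _ c := by
    refine le_algebraMap_of_spectrum_le (fun x hx => ?_) hS.isSelfAdjoint
    obtain ⟨i, rfl⟩ := hS.spectrum_real_eq_range_eigenvalues ▸ hx
    exact hc i
  have := (le_iff.mp hle).dotProduct_mulVec_nonneg w
  rw [Algebra.algebraMap_eq_smul_one, star_trivial, sub_mulVec, smul_mulVec, one_mulVec,
    dotProduct_sub, dotProduct_smul, smul_eq_mul] at this
  linarith

end Matrix

section Restriction

variable {ι R : Type*} [Fintype ι] [CommSemiring R] {A : Finset ι} {v : ι → R}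

lemma dotProduct_eq_dotProduct_restrict_of_support (hv : ∀ k ∉ A, v k = 0) (u : ι → R) :
    v ⬝ᵥ u = (fun k : A => v k) ⬝ᵥ (fun k : A => u k) := by
  rw [dotProduct, dotProduct, sum_coe_sort A (fun k => v k * u k)]
  exact (sum_subset (subset_univ A) fun k _ hk => by rw [hv k hk, zero_mul]).symm

lemma dotProduct_mulVec_eq_submatrix_of_support (hv : ∀ k ∉ A, v k = 0) (S : Matrix ι ι R) :
    v ⬝ᵥ S *ᵥ v = (fun k : A => v k) ⬝ᵥ
      (S.submatrix (fun i : A => (i : ι)) (fun j : A => (j : ι))) *ᵥ (fun k : A => v k) := by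
  rw [dotProduct_eq_dotProduct_restrict_of_support hv]
  congr 1
  funext i
  rw [mulVec, dotProduct_comm, dotProduct_eq_dotProduct_restrict_of_support hv]
  exact dotProduct_comm _ _

end Restriction

lemma two_dotProduct_sub_le_restrictedQuad {p : ℕ} {S : Matrix (Fin p) (Fin p) ℝ}
    (hS : S.PosDef) (μ : Fin p → ℝ) {A : Finset (Fin p)} {v : Fin p → ℝ}
    (hv : ∀ k ∉ A, v k = 0) :
    2 * (v ⬝ᵥ μ) - v ⬝ᵥ S *ᵥ v ≤ restrictedQuad S μ A := by
  rw [dotProduct_eq_dotProduct_restrict_of_support hv, dotProduct_mulVec_eq_submatrix_of_support hv]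
  exact (hS.submatrix Subtype.val_injective).two_dotProduct_sub_le_dotProduct_inv_mulVec _ _

theorem stmt10 {p : ℕ} (c₀ : ℝ) (S : Matrix (Fin p) (Fin p) ℝ) (hS : S.PosDef)
    (heig : ∀ i, hS.1.eigenvalues i ≤ c₀)
    (μd : Fin p → ℝ) (β₀ : Fin p → ℝ) (hβ₀ : β₀ = (2 : ℝ) • S⁻¹.mulVec μd)
    (A₁ : Finset (Fin p)) :
    μd ⬝ᵥ S⁻¹.mulVec μd - restrictedQuad S μd A₁ ≤ c₀ / 4 * ∑ k ∈ A₁ᶜ, (β₀ k) ^ 2 := by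
  set b := S⁻¹ *ᵥ μd
  set w : Fin p → ℝ := fun k => if k ∈ A₁ᶜ then b k else 0
  have hSb : S *ᵥ b = μd := mulVec_nonsing_inv_mulVec (hS.isUnit.map detMonoidHom) μd
  have hsupp : ∀ k ∉ A₁, (b - w) k = 0 := fun k hk => by simp [w, hk]
  have hrestr := two_dotProduct_sub_le_restrictedQuad hS μd hsupp
  have hsq := (isHermitian_iff_isSymm.mp hS.1).two_dotProduct_mulVec_sub_eq b (b - w)
  rw [sub_sub_cancel, hSb] at hsq
  have hw := hS.1.dotProduct_mulVec_le_of_eigenvalues_le_s10 heig w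
  have hww : w ⬝ᵥ w = ∑ k ∈ A₁ᶜ, b k ^ 2 := by
    calc w ⬝ᵥ w = ∑ k, if k ∈ A₁ᶜ then b k ^ 2 else 0 :=
          sum_congr rfl fun k _ => by by_cases hk : k ∈ A₁ <;> simp [w, hk, sq]
      _ = ∑ k ∈ A₁ᶜ, b k ^ 2 := by rw [sum_ite_mem, univ_inter]
  have hβ : ∑ k ∈ A₁ᶜ, β₀ k ^ 2 = 4 * ∑ k ∈ A₁ᶜ, b k ^ 2 := by
    rw [mul_sum]
    refine sum_congr rfl fun k _ => ?_
    simp only [hβ₀, Pi.smul_apply, smul_eq_mul]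
    ring
  rw [hβ, ← hww, dotProduct_comm]
  linarith
end
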